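/- arXiv:2408.08602 — 3 statements merged into one kernel-verified Lean document; each statement's English description precedes it below -/
import Mathlib

section
/- Define z ∈ {0,1}^n by z_i = 1 if β_{ijk} > 0 for some j,k and z_i = 0 otherwise, and assume the set {i : z_i = 1} is nonempty. Under Assumptions A2 and A3b, if ρ(I − hD + hB) < 1 and θ := min over all i with z_i = 1 of (2 Σ_j β_{ij} z_j + Σ_{j,k} β_{ijk} z_j z_k)/δ_i satisfies θ ≥ 4, then the healthy state 0 is locally asymptotically stable, and there exists an endemic equilibrium x̄ of F with x̄_i > 0 for all i and x̄_i ≥ 1/2 for every i with z_i = 1, which is also locally asymptotically stable (bistability). -/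
/-!
The map `F` is monotone on the cube `[0,1]^n` (this is what A3b buys), so a trajectory that starts
between a sub-solution `u ≤ F u` and a super-solution `F w ≤ w` stays between their iterates,
which converge monotonically to fixed points. Hence an equilibrium is locally asymptotically
stable as soon as, along a positive ray `l • v` through it, the points just below it are strict
sub-solutions and the points just above it strict super-solutions: a fixed point caught between
two points of the ray is pinned to the equilibrium by comparing it with `μ • v`, where `μ` is the
extreme ratio `q i / v i`.

At the healthy state the ray is spanned by a vector `v > 0` with `(I - hD + hB) v < v`; it exists
when `ρ(I - hD + hB) < 1` because, by Gelfand's formula, some power `M ^ m` has all row sums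
below `1`, and then `v = ∑_{k<m} M ^ k 1` works. Near `0` the quadratic terms are negligible.

The endemic equilibrium `x̄` is the limit of the decreasing iterates from `1`. The condition
`θ ≥ 4` makes `{x | z / 2 ≤ x}` invariant, so `x̄ i ≥ 1/2` whenever `z i = 1`, and irreducibility
of `B` makes `x̄` positive. Along the ray through `x̄`,
`F (l • x̄) i - l * x̄ i = h l (1 - l) ((B x̄) i x̄ i - q i (1 - (1 + l) x̄ i))` with
`q i = ∑ β_ijk x̄ j x̄ k`, and the last factor is positive near `l = 1`: `(B x̄) i > 0` by
irreducibility (here `n ≥ 2` is needed), and `q i = 0` unless `x̄ i ≥ 1/2`.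
-/

open Finset Filter

/-- Spectral radius of a real square matrix: the maximum modulus of its complex
eigenvalues (elements of the spectrum of the matrix viewed over `ℂ`). -/
noncomputable def specRad {n : ℕ} (M : Matrix (Fin n) (Fin n) ℝ) : ℝ :=
  sSup ((fun z : ℂ => ‖z‖) '' spectrum ℂ (M.map (fun a => (a : ℂ))))

/-- A nonnegative matrix is irreducible: there is no nonempty proper subset `S` of the
index set with `M i j = 0` for all `i ∈ S` and `j ∉ S`. -/
def MatIrred {n : ℕ} (M : Matrix (Fin n) (Fin n) ℝ) : Prop :=
  ∀ S : Set (Fin n), S.Nonempty → S ≠ Set.univ → ∃ i ∈ S, ∃ j, j ∉ S ∧ M i j ≠ 0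

/-- A nonnegative `n×n×n` array is irreducible: there is no nonempty proper subset `S`
with `H i j k = 0` for all `i ∈ S` and `j, k ∉ S`. -/
def TensIrred {n : ℕ} (H : Fin n → Fin n → Fin n → ℝ) : Prop :=
  ∀ S : Set (Fin n), S.Nonempty → S ≠ Set.univ →
    ∃ i ∈ S, ∃ j k, j ∉ S ∧ k ∉ S ∧ H i j k ≠ 0

/-- The discrete-time higher-order SIS map
`F(x)_i = x_i + h(−δ_i x_i + (1−x_i)(Σ_j β_{ij} x_j + Σ_{j,k} β_{ijk} x_j x_k))`. -/
noncomputable def SIS {n : ℕ} (h : ℝ) (δ : Fin n → ℝ) (B : Matrix (Fin n) (Fin n) ℝ)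
    (H : Fin n → Fin n → Fin n → ℝ) (x : Fin n → ℝ) : Fin n → ℝ := fun i =>
  x i + h * (-(δ i * x i) +
    (1 - x i) * ((∑ j, B i j * x j) + ∑ j, ∑ k, H i j k * x j * x k))

/-- `x` is a trajectory of the discrete-time system `x(t+1) = F(x(t))`. -/
def IsTraj {n : ℕ} (F : (Fin n → ℝ) → Fin n → ℝ) (x : ℕ → Fin n → ℝ) : Prop :=
  ∀ t, x (t + 1) = F (x t)

/-- Membership in the cube `[0,1]^n`. -/
def InCube {n : ℕ} (y : Fin n → ℝ) : Prop := ∀ i, y i ∈ Set.Icc (0 : ℝ) 1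

/-- Local asymptotic stability (max-norm) of an equilibrium `xb`, for trajectories
starting in `[0,1]^n`. -/
def LocAsympStable {n : ℕ} (F : (Fin n → ℝ) → Fin n → ℝ) (xb : Fin n → ℝ) : Prop :=
  ∀ ε > 0, ∃ d > 0, ∀ x : ℕ → Fin n → ℝ, IsTraj F x → InCube (x 0) → ‖x 0 - xb‖ < d →
    (∀ t, ‖x t - xb‖ < ε) ∧ Tendsto x atTop (nhds xb)

/-- Instability (max-norm) of an equilibrium `xb`, for trajectories starting in `[0,1]^n`. -/
def Unstable {n : ℕ} (F : (Fin n → ℝ) → Fin n → ℝ) (xb : Fin n → ℝ) : Prop :=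
  ∃ ε > 0, ∀ d > 0, ∃ x : ℕ → Fin n → ℝ, IsTraj F x ∧ InCube (x 0) ∧ ‖x 0 - xb‖ < d ∧
    ∃ t, ε ≤ ‖x t - xb‖

open Set Topology Function
open scoped Matrix

namespace Matrix

variable {ι : Type*} [Fintype ι] {M : Matrix ι ι ℝ}

theorem mulVec_nonneg_of_nonneg (hM : ∀ i j, 0 ≤ M i j) {x : ι → ℝ} (hx : 0 ≤ x) :
    0 ≤ M *ᵥ x :=
  fun i => dotProduct_nonneg_of_nonneg (hM i) hx

theorem mulVec_mono_of_nonneg (hM : ∀ i j, 0 ≤ M i j) {x y : ι → ℝ} (hxy : x ≤ y) :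
    M *ᵥ x ≤ M *ᵥ y :=
  fun i => dotProduct_le_dotProduct_of_nonneg_left hxy (hM i)

end Matrix

section Spectral

attribute [local instance] Matrix.linftyOpNormedRing Matrix.linftyOpNormedAlgebra

theorem exists_norm_pow_lt_one_of_spectralRadius_lt_one {A : Type*} [NormedRing A]
    [NormedAlgebra ℂ A] [CompleteSpace A] {a : A} (ha : spectralRadius ℂ a < 1) :
    ∃ m, 0 < m ∧ ‖a ^ m‖ < 1 := by
  obtain ⟨m, hm, hm0⟩ := (((spectrum.pow_norm_pow_one_div_tendsto_nhds_spectralRadius a).eventually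
    (gt_mem_nhds ha)).and (eventually_gt_atTop 0)).exists
  refine ⟨m, hm0, lt_of_not_ge fun h1 => hm.not_ge ?_⟩
  exact ENNReal.one_le_ofReal.2 (Real.one_le_rpow h1 (by positivity))

theorem spectralRadius_lt_one_of_specRad_lt_one {n : ℕ} {M : Matrix (Fin n) (Fin n) ℝ}
    (hM : specRad M < 1) : spectralRadius ℂ (M.map ((↑) : ℝ → ℂ)) < 1 := by
  set A := M.map ((↑) : ℝ → ℂ)
  rcases (spectrum ℂ A).eq_empty_or_nonempty with hA | hA
  · simp [spectralRadius, hA]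
  have hbdd : BddAbove ((‖·‖) '' spectrum ℂ A) :=
    ((spectrum.isCompact A).image continuous_norm).bddAbove
  simpa using spectrum.spectralRadius_lt_of_forall_lt_of_nonempty hA (r := 1) fun k hk => by
    rw [← NNReal.coe_lt_coe]
    exact (le_csSup hbdd ⟨k, hk, rfl⟩).trans_lt hM

theorem Matrix.exists_pos_mulVec_lt_of_spectralRadius_lt_one {ι : Type*} [Fintype ι]
    [DecidableEq ι] {M : Matrix ι ι ℝ} (hM : ∀ i j, 0 ≤ M i j)
    (hρ : spectralRadius ℂ (M.map ((↑) : ℝ → ℂ)) < 1) :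
    ∃ v : ι → ℝ, (∀ i, 0 < v i) ∧ ∀ i, (M *ᵥ v) i < v i := by
  obtain ⟨m, hm0, hm⟩ := exists_norm_pow_lt_one_of_spectralRadius_lt_one hρ
  have hpow : M.map ((↑) : ℝ → ℂ) ^ m = (M ^ m).map (↑) :=
    (Matrix.map_pow M Complex.ofRealHom m).symm
  have hrow : ∀ i, (M ^ m *ᵥ 1) i < 1 := fun i => calc
    (M ^ m *ᵥ 1) i ≤ ∑ j, ‖(M.map ((↑) : ℝ → ℂ) ^ m) i j‖₊ := by
      rw [hpow]
      simpa [mulVec, dotProduct] using Finset.sum_le_sum fun j _ => le_abs_self ((M ^ m) i j)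
    _ ≤ ‖M.map ((↑) : ℝ → ℂ) ^ m‖ := by
      rw [linfty_opNorm_def]
      exact_mod_cast Finset.le_sup (f := fun i => ∑ j, ‖(M.map ((↑) : ℝ → ℂ) ^ m) i j‖₊)
        (Finset.mem_univ i)
    _ < 1 := hm
  set e : ℕ → ι → ℝ := fun k => M ^ k *ᵥ 1
  have he_succ : ∀ k, e (k + 1) = M *ᵥ e k := fun k => by simp [e, pow_succ', mulVec_mulVec]
  have he_nonneg : ∀ k, 0 ≤ e k := by
    intro k
    induction k with
    | zero => simp [e, zero_le_one]
    | succ k ih => rw [he_succ]; exact mulVec_nonneg_of_nonneg hM ih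
  have htel : M *ᵥ (∑ k ∈ range m, e k) + e 0 = ∑ k ∈ range m, e k + e m := by
    rw [mulVec_sum, ← sum_range_succ, sum_range_succ']
    simp only [he_succ]
  refine ⟨∑ k ∈ range m, e k, fun i => ?_, fun i => ?_⟩
  · calc (0 : ℝ) < e 0 i := by simp [e]
      _ ≤ ∑ k ∈ range m, e k i := single_le_sum (fun k _ => he_nonneg k i) (mem_range.2 hm0)
      _ = (∑ k ∈ range m, e k) i := by simp
  · have := congrFun htel i
    simp only [Pi.add_apply, e, pow_zero, one_mulVec, Pi.one_apply] at this
    linarith [hrow i]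

end Spectral

section MonotoneDynamics

variable {ι : Type*} {G : (ι → ℝ) → ι → ℝ} {s : Set (ι → ℝ)}

theorem iterate_le_iterate_of_le (hmaps : MapsTo G s s) (hmono : MonotoneOn G s)
    {x y : ι → ℝ} (hx : x ∈ s) (hy : y ∈ s) (hxy : x ≤ y) (t : ℕ) : G^[t] x ≤ G^[t] y := by
  induction t with
  | zero => exact hxy
  | succ t ih =>
    rw [iterate_succ_apply', iterate_succ_apply']
    exact hmono (hmaps.iterate t hx) (hmaps.iterate t hy) ih

theorem monotone_iterate_of_mapsTo (hmaps : MapsTo G s s) (hmono : MonotoneOn G s)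
    {x : ι → ℝ} (hx : x ∈ s) (hGx : x ≤ G x) : Monotone fun t => G^[t] x :=
  monotone_nat_of_le_succ fun t => by
    rw [iterate_succ_apply]
    exact iterate_le_iterate_of_le hmaps hmono hx (hmaps hx) hGx t

theorem antitone_iterate_of_mapsTo (hmaps : MapsTo G s s) (hmono : MonotoneOn G s)
    {x : ι → ℝ} (hx : x ∈ s) (hGx : G x ≤ x) : Antitone fun t => G^[t] x :=
  antitone_nat_of_succ_le fun t => by
    rw [iterate_succ_apply]
    exact iterate_le_iterate_of_le hmaps hmono (hmaps hx) hx hGx t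

theorem exists_isFixedPt_tendsto_iterate_of_le_map (hmaps : MapsTo G s s)
    (hmono : MonotoneOn G s) (hcont : Continuous G) {x y : ι → ℝ} (hx : x ∈ s) (hy : y ∈ s)
    (hGx : x ≤ G x) (hfix : IsFixedPt G y) (hxy : x ≤ y) :
    ∃ p, IsFixedPt G p ∧ x ≤ p ∧ p ≤ y ∧ Tendsto (fun t => G^[t] x) atTop (𝓝 p) := by
  have hle : ∀ t, G^[t] x ≤ y := fun t =>
    (iterate_le_iterate_of_le hmaps hmono hx hy hxy t).trans_eq (hfix.iterate t)
  have htend := tendsto_atTop_ciSup (monotone_iterate_of_mapsTo hmaps hmono hx hGx)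
    ⟨y, forall_mem_range.2 hle⟩
  exact ⟨_, isFixedPt_of_tendsto_iterate htend hcont.continuousAt,
    le_ciSup_of_le ⟨y, forall_mem_range.2 hle⟩ 0 le_rfl, ciSup_le hle, htend⟩

theorem exists_isFixedPt_tendsto_iterate_of_map_le (hmaps : MapsTo G s s)
    (hmono : MonotoneOn G s) (hcont : Continuous G) {x y : ι → ℝ} (hx : x ∈ s) (hy : y ∈ s)
    (hGx : G x ≤ x) (hfix : IsFixedPt G y) (hyx : y ≤ x) :
    ∃ q, IsFixedPt G q ∧ y ≤ q ∧ q ≤ x ∧ Tendsto (fun t => G^[t] x) atTop (𝓝 q) := by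
  have hge : ∀ t, y ≤ G^[t] x := fun t =>
    (hfix.iterate t).symm.trans_le (iterate_le_iterate_of_le hmaps hmono hy hx hyx t)
  have htend := tendsto_atTop_ciInf (antitone_iterate_of_mapsTo hmaps hmono hx hGx)
    ⟨y, forall_mem_range.2 hge⟩
  exact ⟨_, isFixedPt_of_tendsto_iterate htend hcont.continuousAt, le_ciInf hge,
    ciInf_le_of_le ⟨y, forall_mem_range.2 hge⟩ 0 le_rfl, htend⟩

theorem exists_le_smul_apply_eq [Finite ι] [Nonempty ι] {v : ι → ℝ} (hv : ∀ i, 0 < v i)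
    (q : ι → ℝ) : ∃ μ i, q ≤ μ • v ∧ q i = μ * v i := by
  obtain ⟨i, hi⟩ := Finite.exists_max fun i => q i / v i
  refine ⟨q i / v i, i, fun j => ?_, by rw [div_mul_cancel₀ _ (hv i).ne']⟩
  rw [Pi.smul_apply, smul_eq_mul, ← div_le_iff₀ (hv j)]
  exact hi j

theorem exists_smul_le_apply_eq [Finite ι] [Nonempty ι] {v : ι → ℝ} (hv : ∀ i, 0 < v i)
    (p : ι → ℝ) : ∃ μ i, μ • v ≤ p ∧ p i = μ * v i := by
  obtain ⟨i, hi⟩ := Finite.exists_min fun i => p i / v i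
  refine ⟨p i / v i, i, fun j => ?_, by rw [div_mul_cancel₀ _ (hv i).ne']⟩
  rw [Pi.smul_apply, smul_eq_mul, ← le_div_iff₀ (hv j)]
  exact hi j

theorem le_smul_of_isFixedPt_of_map_lt [Finite ι] (hmono : MonotoneOn G s) {v q : ι → ℝ}
    (hv : ∀ i, 0 < v i) {a b : ℝ} (hq : IsFixedPt G q) (hqs : q ∈ s) (hqb : q ≤ b • v)
    (hray : ∀ l ∈ Ioc a b, l • v ∈ s ∧ ∀ i, G (l • v) i < l * v i) : q ≤ a • v := by
  by_contra hne
  obtain ⟨i, hi⟩ : ∃ i, a * v i < q i := by simpa [Pi.le_def] using hne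
  have : Nonempty ι := ⟨i⟩
  obtain ⟨μ, i₀, hqμ, hi₀⟩ := exists_le_smul_apply_eq hv q
  have haμ : a < μ := lt_of_mul_lt_mul_right (hi.trans_le (hqμ i)) (hv i).le
  have hμb : μ ≤ b := le_of_mul_le_mul_right (hi₀ ▸ hqb i₀) (hv i₀)
  obtain ⟨hμs, hlt⟩ := hray μ ⟨haμ, hμb⟩
  have hGq := hmono hqs hμs hqμ i₀
  rw [hq.eq] at hGq
  linarith [hlt i₀]

theorem smul_le_of_isFixedPt_of_lt_map [Finite ι] (hmono : MonotoneOn G s) {v p : ι → ℝ}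
    (hv : ∀ i, 0 < v i) {a b : ℝ} (hp : IsFixedPt G p) (hps : p ∈ s) (hap : a • v ≤ p)
    (hray : ∀ l ∈ Ico a b, l • v ∈ s ∧ ∀ i, l * v i < G (l • v) i) : b • v ≤ p := by
  by_contra hne
  obtain ⟨i, hi⟩ : ∃ i, p i < b * v i := by simpa [Pi.le_def] using hne
  have : Nonempty ι := ⟨i⟩
  obtain ⟨μ, i₀, hμp, hi₀⟩ := exists_smul_le_apply_eq hv p
  have hμb : μ < b := lt_of_mul_lt_mul_right ((hμp i).trans_lt hi) (hv i).le
  have haμ : a ≤ μ := le_of_mul_le_mul_right (hi₀ ▸ hap i₀) (hv i₀)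
  obtain ⟨hμs, hlt⟩ := hray μ ⟨haμ, hμb⟩
  have hGp := hmono hμs hps hμp i₀
  rw [hp.eq] at hGp
  linarith [hlt i₀]

theorem tendsto_iterate_smul_of_map_lt [Finite ι] [s.OrdConnected] (hmaps : MapsTo G s s)
    (hmono : MonotoneOn G s) (hcont : Continuous G) {v : ι → ℝ} (hv : ∀ i, 0 < v i) {a b : ℝ}
    (hab : a < b) (ha : a • v ∈ s) (hfix : IsFixedPt G (a • v))
    (hray : ∀ l ∈ Ioc a b, l • v ∈ s ∧ ∀ i, G (l • v) i < l * v i) :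
    Tendsto (fun t => G^[t] (b • v)) atTop (𝓝 (a • v)) := by
  obtain ⟨hbs, hbv⟩ := hray b ⟨hab, le_rfl⟩
  obtain ⟨q, hq, haq, hqb, htend⟩ := exists_isFixedPt_tendsto_iterate_of_map_le hmaps hmono
    hcont hbs ha (fun i => (hbv i).le) hfix (smul_le_smul_of_nonneg_right hab.le fun i => (hv i).le)
  have hqs : q ∈ s := Set.OrdConnected.out ‹_› ha hbs ⟨haq, hqb⟩
  rwa [le_antisymm (le_smul_of_isFixedPt_of_map_lt hmono hv hq hqs hqb hray) haq] at htend

theorem tendsto_iterate_smul_of_lt_map [Finite ι] [s.OrdConnected] (hmaps : MapsTo G s s)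
    (hmono : MonotoneOn G s) (hcont : Continuous G) {v : ι → ℝ} (hv : ∀ i, 0 < v i) {a b : ℝ}
    (hab : a < b) (hb : b • v ∈ s) (hfix : IsFixedPt G (b • v))
    (hray : ∀ l ∈ Ico a b, l • v ∈ s ∧ ∀ i, l * v i < G (l • v) i) :
    Tendsto (fun t => G^[t] (a • v)) atTop (𝓝 (b • v)) := by
  obtain ⟨has, hav⟩ := hray a ⟨le_rfl, hab⟩
  obtain ⟨p, hp, hap, hpb, htend⟩ := exists_isFixedPt_tendsto_iterate_of_le_map hmaps hmono
    hcont has hb (fun i => (hav i).le) hfix (smul_le_smul_of_nonneg_right hab.le fun i => (hv i).le)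
  have hps : p ∈ s := Set.OrdConnected.out ‹_› has hb ⟨hap, hpb⟩
  rwa [le_antisymm hpb (smul_le_of_isFixedPt_of_lt_map hmono hv hp hps hap hray)] at htend

end MonotoneDynamics

section Stability

variable {n : ℕ} {G : (Fin n → ℝ) → Fin n → ℝ}

theorem inCube_iff_mem_Icc {y : Fin n → ℝ} : InCube y ↔ y ∈ Set.Icc 0 1 := by
  simp [InCube, Pi.le_def, forall_and]

theorem IsTraj.eq_iterate {x : ℕ → Fin n → ℝ} (hx : IsTraj G x) (t : ℕ) :
    x t = G^[t] (x 0) := by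
  induction t with
  | zero => rfl
  | succ t ih => rw [hx t, ih, iterate_succ_apply']

theorem locAsympStable_of_squeeze (hmaps : MapsTo G (Set.Icc 0 1) (Set.Icc 0 1))
    (hmono : MonotoneOn G (Set.Icc 0 1)) {xb : Fin n → ℝ}
    (hsq : ∀ ε > 0, ∃ u ∈ Set.Icc (0 : Fin n → ℝ) 1, ∃ w ∈ Set.Icc (0 : Fin n → ℝ) 1,
      u ≤ G u ∧ G w ≤ w ∧ ‖u - xb‖ < ε ∧ ‖w - xb‖ < ε ∧ Set.Icc u w ∈ 𝓝[Set.Icc 0 1] xb ∧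
      Tendsto (fun t => G^[t] u) atTop (𝓝 xb) ∧ Tendsto (fun t => G^[t] w) atTop (𝓝 xb)) :
    LocAsympStable G xb := by
  intro ε hε
  obtain ⟨u, hu, w, hw, hGu, hGw, huε, hwε, hnhds, hut, hwt⟩ := hsq ε hε
  obtain ⟨d, hd, hball⟩ := Metric.mem_nhdsWithin_iff.1 hnhds
  refine ⟨d, hd, fun x hx hx0 hdx => ?_⟩
  rw [inCube_iff_mem_Icc] at hx0
  obtain ⟨hux, hxw⟩ := hball ⟨by rwa [Metric.mem_ball, dist_eq_norm], hx0⟩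
  have hlow : ∀ t, G^[t] u ≤ x t := fun t =>
    (hx.eq_iterate t).symm ▸ iterate_le_iterate_of_le hmaps hmono hu hx0 hux t
  have hhigh : ∀ t, x t ≤ G^[t] w := fun t =>
    (hx.eq_iterate t).symm ▸ iterate_le_iterate_of_le hmaps hmono hx0 hw hxw t
  refine ⟨fun t => (pi_norm_lt_iff hε).2 fun i => ?_, tendsto_pi_nhds.2 fun i =>
    tendsto_of_tendsto_of_tendsto_of_le_of_le (tendsto_pi_nhds.1 hut i)
      (tendsto_pi_nhds.1 hwt i) (fun t => hlow t i) (fun t => hhigh t i)⟩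
  have hut_le := monotone_iterate_of_mapsTo hmaps hmono hu hGu (Nat.zero_le t) i
  have hwt_le := antitone_iterate_of_mapsTo hmaps hmono hw hGw (Nat.zero_le t) i
  have hui := (pi_norm_lt_iff hε).1 huε i
  have hwi := (pi_norm_lt_iff hε).1 hwε i
  simp only [Pi.sub_apply, Real.norm_eq_abs, abs_lt, iterate_zero, id] at hui hwi hut_le hwt_le ⊢
  constructor <;> linarith [hlow t i, hhigh t i]

theorem locAsympStable_zero_of_eventually_map_smul_lt
    (hmaps : MapsTo G (Set.Icc 0 1) (Set.Icc 0 1)) (hmono : MonotoneOn G (Set.Icc 0 1))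
    (hcont : Continuous G) (h0 : G 0 = 0) {v : Fin n → ℝ} (hv : ∀ i, 0 < v i)
    (hray : ∀ᶠ c in 𝓝[>] 0, c • v ∈ Set.Icc (0 : Fin n → ℝ) 1 ∧ ∀ i, G (c • v) i < c * v i) :
    LocAsympStable G 0 := by
  refine locAsympStable_of_squeeze hmaps hmono fun ε hε => ?_
  have hsmall : ∀ᶠ c in 𝓝 (0 : ℝ), ‖c • v‖ < ε := by
    have : Tendsto (fun c : ℝ => c • v) (𝓝 0) (𝓝 0) := by
      simpa using (tendsto_id (x := 𝓝 (0 : ℝ))).smul_const v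
    exact this.norm.eventually (gt_mem_nhds (by simpa using hε))
  obtain ⟨b, hb, hsub⟩ := mem_nhdsGT_iff_exists_Ioc_subset.1
    (hray.and (nhdsWithin_le_nhds hsmall))
  obtain ⟨⟨hbs, hbv⟩, hbε⟩ := hsub ⟨hb, le_rfl⟩
  refine ⟨0, left_mem_Icc.2 zero_le_one, b • v, hbs, h0.ge, fun i => (hbv i).le,
    by simpa using hε, by simpa using hbε, ?_, ?_, ?_⟩
  · refine mem_of_superset (inter_mem_nhdsWithin _ (pi_Iic_mem_nhds fun i => ?_))
      fun x hx => ⟨hx.1.1, hx.2⟩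
    simpa using mul_pos hb (hv i)
  · simp [iterate_fixed h0]
  · simpa using tendsto_iterate_smul_of_map_lt hmaps hmono hcont hv hb (a := 0)
      (by simp) (by rwa [zero_smul])
      fun l hl => (hsub hl).1

theorem locAsympStable_of_eventually_smul (hmaps : MapsTo G (Set.Icc 0 1) (Set.Icc 0 1))
    (hmono : MonotoneOn G (Set.Icc 0 1)) (hcont : Continuous G) {xb : Fin n → ℝ}
    (hxbs : xb ∈ Set.Icc 0 1) (hxb : ∀ i, 0 < xb i) (hfix : IsFixedPt G xb)
    (hlt : ∀ᶠ l in 𝓝[<] 1, l • xb ∈ Set.Icc (0 : Fin n → ℝ) 1 ∧ ∀ i, l * xb i < G (l • xb) i)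
    (hgt : ∀ᶠ l in 𝓝[>] 1, l • xb ∈ Set.Icc (0 : Fin n → ℝ) 1 ∧ ∀ i, G (l • xb) i < l * xb i) :
    LocAsympStable G xb := by
  refine locAsympStable_of_squeeze hmaps hmono fun ε hε => ?_
  have hsmall : ∀ᶠ l in 𝓝 (1 : ℝ), ‖l • xb - xb‖ < ε := by
    have : Tendsto (fun l : ℝ => l • xb - xb) (𝓝 1) (𝓝 0) := by
      simpa using ((tendsto_id (x := 𝓝 (1 : ℝ))).smul_const xb).sub_const xb
    exact this.norm.eventually (gt_mem_nhds (by simpa using hε))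
  obtain ⟨a, ha, hsubA⟩ := mem_nhdsLT_iff_exists_Ico_subset.1
    (hlt.and (nhdsWithin_le_nhds hsmall))
  obtain ⟨b, hb, hsubB⟩ := mem_nhdsGT_iff_exists_Ioc_subset.1
    (hgt.and (nhdsWithin_le_nhds hsmall))
  obtain ⟨⟨has, hav⟩, haε⟩ := hsubA ⟨le_rfl, ha⟩
  obtain ⟨⟨hbs, hbv⟩, hbε⟩ := hsubB ⟨hb, le_rfl⟩
  refine ⟨a • xb, has, b • xb, hbs, fun i => (hav i).le, fun i => (hbv i).le, haε, hbε,
    nhdsWithin_le_nhds (pi_Icc_mem_nhds (fun i => ?_) fun i => ?_), ?_, ?_⟩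
  · simpa using mul_lt_of_lt_one_left (hxb i) (show a < 1 from ha)
  · simpa using lt_mul_of_one_lt_left (hxb i) (show 1 < b from hb)
  · simpa using tendsto_iterate_smul_of_lt_map hmaps hmono hcont hxb ha
      (by simpa using hxbs) (by simpa using hfix) fun l hl => (hsubA hl).1
  · simpa using tendsto_iterate_smul_of_map_lt hmaps hmono hcont hxb hb
      (by simpa using hxbs) (by simpa using hfix) fun l hl => (hsubB hl).1

end Stability

namespace MatIrred

variable {n : ℕ} {B : Matrix (Fin n) (Fin n) ℝ}

theorem pos_of_support_closed (hB : MatIrred B) {x : Fin n → ℝ} (hx : 0 ≤ x)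
    (hne : ∃ i, x i ≠ 0) (hclosed : ∀ i j, x i = 0 → B i j ≠ 0 → x j = 0) (i : Fin n) :
    0 < x i := by
  refine (hx i).lt_of_ne' fun hi => ?_
  obtain ⟨i', hi'⟩ := hne
  obtain ⟨k, hk, j, hj, hkj⟩ :=
    hB {i | x i = 0} ⟨i, hi⟩ ((ne_univ_iff_exists_notMem _).2 ⟨i', hi'⟩)
  exact hj (hclosed k j hk hkj)

theorem exists_ne_zero (hB : MatIrred B) (hn : 2 ≤ n) (i : Fin n) : ∃ j, B i j ≠ 0 := by
  have : Nontrivial (Fin n) := Fin.nontrivial_iff_two_le.2 hn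
  obtain ⟨k, hk, j, -, hkj⟩ := hB {i} (singleton_nonempty i) (singleton_ne_univ i)
  rw [mem_singleton_iff] at hk
  exact ⟨j, hk ▸ hkj⟩

theorem mulVec_pos (hB : MatIrred B) (hn : 2 ≤ n) (hB0 : ∀ i j, 0 ≤ B i j) {x : Fin n → ℝ}
    (hx : ∀ i, 0 < x i) (i : Fin n) : 0 < (B *ᵥ x) i := by
  obtain ⟨j, hj⟩ := hB.exists_ne_zero hn i
  exact Finset.sum_pos' (fun k _ => mul_nonneg (hB0 i k) (hx k).le)
    ⟨j, mem_univ j, mul_pos ((hB0 i j).lt_of_ne' hj) (hx j)⟩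

end MatIrred

section SIS

variable {n : ℕ} {h : ℝ} {δ : Fin n → ℝ} {B : Matrix (Fin n) (Fin n) ℝ}
  {H : Fin n → Fin n → Fin n → ℝ}

def tensorQuad (H : Fin n → Fin n → Fin n → ℝ) (x : Fin n → ℝ) : Fin n → ℝ :=
  fun i => ∑ j, ∑ k, H i j k * x j * x k

def infectionRate (B : Matrix (Fin n) (Fin n) ℝ) (H : Fin n → Fin n → Fin n → ℝ)
    (x : Fin n → ℝ) : Fin n → ℝ :=
  B *ᵥ x + tensorQuad H x

theorem tensorQuad_nonneg (hH : ∀ i j k, 0 ≤ H i j k) {x : Fin n → ℝ} (hx : 0 ≤ x)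
    (i : Fin n) : 0 ≤ tensorQuad H x i :=
  sum_nonneg fun j _ => sum_nonneg fun k _ =>
    mul_nonneg (mul_nonneg (hH i j k) (hx j)) (hx k)

theorem tensorQuad_mono (hH : ∀ i j k, 0 ≤ H i j k) {x y : Fin n → ℝ} (hx : 0 ≤ x)
    (hxy : x ≤ y) : tensorQuad H x ≤ tensorQuad H y := fun i =>
  sum_le_sum fun j _ => sum_le_sum fun k _ =>
    mul_le_mul (mul_le_mul_of_nonneg_left (hxy j) (hH i j k)) (hxy k) (hx k)
      (mul_nonneg (hH i j k) ((hx j).trans (hxy j)))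

theorem tensorQuad_smul (c : ℝ) (x : Fin n → ℝ) :
    tensorQuad H (c • x) = c ^ 2 • tensorQuad H x := by
  ext i
  simp only [tensorQuad, Pi.smul_apply, smul_eq_mul, mul_sum]
  exact sum_congr rfl fun j _ => sum_congr rfl fun k _ => by ring

theorem infectionRate_nonneg (hB : ∀ i j, 0 ≤ B i j) (hH : ∀ i j k, 0 ≤ H i j k)
    {x : Fin n → ℝ} (hx : 0 ≤ x) (i : Fin n) : 0 ≤ infectionRate B H x i :=
  add_nonneg (Matrix.mulVec_nonneg_of_nonneg hB hx i) (tensorQuad_nonneg hH hx i)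

theorem infectionRate_mono (hB : ∀ i j, 0 ≤ B i j) (hH : ∀ i j k, 0 ≤ H i j k)
    {x y : Fin n → ℝ} (hx : 0 ≤ x) (hxy : x ≤ y) : infectionRate B H x ≤ infectionRate B H y :=
  add_le_add (Matrix.mulVec_mono_of_nonneg hB hxy) (tensorQuad_mono hH hx hxy)

theorem SIS_apply (x : Fin n → ℝ) (i : Fin n) :
    SIS h δ B H x i =
      x i * (1 - h * δ i - h * infectionRate B H x i) + h * infectionRate B H x i := by
  simp only [SIS, infectionRate, tensorQuad, Pi.add_apply, Matrix.mulVec, dotProduct]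
  ring

theorem add_infectionRate_lt (hh : 0 ≤ h) (hB : ∀ i j, 0 ≤ B i j) (hH : ∀ i j k, 0 ≤ H i j k)
    (hA3b : ∀ i, h * (δ i + (∑ j, B i j) + ∑ j, ∑ k, H i j k) < 1) {x : Fin n → ℝ}
    (hx : x ∈ Set.Icc 0 1) (i : Fin n) : h * δ i + h * infectionRate B H x i < 1 := by
  have hle : infectionRate B H x i ≤ infectionRate B H 1 i :=
    infectionRate_mono hB hH hx.1 hx.2 i
  have h1 : infectionRate B H 1 i = (∑ j, B i j) + ∑ j, ∑ k, H i j k := by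
    simp [infectionRate, tensorQuad, Matrix.mulVec, dotProduct]
  nlinarith [hA3b i]

theorem SIS_zero : SIS h δ B H 0 = 0 := by
  ext i
  simp [SIS]

theorem SIS_mem_Icc (hh : 0 ≤ h) (hB : ∀ i j, 0 ≤ B i j) (hH : ∀ i j k, 0 ≤ H i j k)
    (hA3b : ∀ i, h * (δ i + (∑ j, B i j) + ∑ j, ∑ k, H i j k) < 1) {x : Fin n → ℝ}
    (hx : x ∈ Set.Icc 0 1) (i : Fin n) : SIS h δ B H x i ∈ Set.Icc 0 (1 - h * δ i) := by
  have hr := mul_nonneg hh (infectionRate_nonneg hB hH hx.1 i)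
  have hlt := add_infectionRate_lt hh hB hH hA3b hx i
  have hx0 : 0 ≤ x i := hx.1 i
  have hx1 : x i ≤ 1 := hx.2 i
  rw [SIS_apply]
  constructor <;> nlinarith [mul_nonneg hx0 (sub_nonneg.2 hlt.le),
    mul_nonneg (sub_nonneg.2 hx1) (sub_nonneg.2 hlt.le)]

theorem mapsTo_SIS (hh : 0 ≤ h) (hδ : ∀ i, 0 ≤ δ i) (hB : ∀ i j, 0 ≤ B i j)
    (hH : ∀ i j k, 0 ≤ H i j k) (hA3b : ∀ i, h * (δ i + (∑ j, B i j) + ∑ j, ∑ k, H i j k) < 1) :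
    MapsTo (SIS h δ B H) (Set.Icc 0 1) (Set.Icc 0 1) := fun _ hx =>
  ⟨fun i => (SIS_mem_Icc hh hB hH hA3b hx i).1,
    fun i => (SIS_mem_Icc hh hB hH hA3b hx i).2.trans (sub_le_self _ (mul_nonneg hh (hδ i)))⟩

theorem monotoneOn_SIS (hh : 0 ≤ h) (hB : ∀ i j, 0 ≤ B i j) (hH : ∀ i j k, 0 ≤ H i j k)
    (hA3b : ∀ i, h * (δ i + (∑ j, B i j) + ∑ j, ∑ k, H i j k) < 1) :
    MonotoneOn (SIS h δ B H) (Set.Icc 0 1) := fun x hx y hy hxy i => by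
  have hr := infectionRate_mono hB hH hx.1 hxy i
  have hlt := add_infectionRate_lt hh hB hH hA3b hx i
  rw [SIS_apply, SIS_apply]
  nlinarith [mul_nonneg (sub_nonneg.2 (hxy i)) (sub_nonneg.2 hlt.le),
    mul_nonneg hh (mul_nonneg (sub_nonneg.2 (show y i ≤ 1 from hy.2 i)) (sub_nonneg.2 hr))]

theorem continuous_SIS : Continuous (SIS h δ B H) :=
  continuous_pi fun i => by unfold SIS; fun_prop

theorem linearization_mulVec (x : Fin n → ℝ) (i : Fin n) :
    ((1 - h • Matrix.diagonal δ + h • B) *ᵥ x) i = (1 - h * δ i) * x i + h * (B *ᵥ x) i := by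
  simp [Matrix.add_mulVec, Matrix.sub_mulVec, Matrix.smul_mulVec, Matrix.mulVec_diagonal]
  ring

theorem linearization_nonneg (hh : 0 ≤ h) (hδ1 : ∀ i, h * δ i ≤ 1) (hB : ∀ i j, 0 ≤ B i j)
    (i j : Fin n) : 0 ≤ (1 - h • Matrix.diagonal δ + h • B) i j := by
  rcases eq_or_ne i j with rfl | hij
  · simpa using add_nonneg (sub_nonneg.2 (hδ1 i)) (mul_nonneg hh (hB i i))
  · simpa [hij] using mul_nonneg hh (hB i j)

theorem SIS_smul_le (hh : 0 ≤ h) (hB : ∀ i j, 0 ≤ B i j) (hH : ∀ i j k, 0 ≤ H i j k) {c : ℝ}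
    (hc : 0 ≤ c) {v : Fin n → ℝ} (hv : 0 ≤ v) (i : Fin n) :
    SIS h δ B H (c • v) i ≤
      c * ((1 - h • Matrix.diagonal δ + h • B) *ᵥ v) i + h * c ^ 2 * tensorQuad H v i := by
  have hr := mul_nonneg (mul_nonneg hh (mul_nonneg hc (hv i)))
    (infectionRate_nonneg hB hH (smul_nonneg hc hv) i)
  have hQ := congrFun (tensorQuad_smul (H := H) c v) i
  simp only [SIS_apply, infectionRate, linearization_mulVec, Pi.add_apply, Pi.smul_apply,
    smul_eq_mul, Matrix.mulVec_smul] at hr hQ ⊢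
  rw [hQ] at hr ⊢
  nlinarith

theorem eventually_SIS_smul_lt (hh : 0 ≤ h) (hB : ∀ i j, 0 ≤ B i j)
    (hH : ∀ i j k, 0 ≤ H i j k) {v : Fin n → ℝ} (hv : ∀ i, 0 < v i)
    (hMv : ∀ i, ((1 - h • Matrix.diagonal δ + h • B) *ᵥ v) i < v i) :
    ∀ᶠ c in 𝓝[>] 0, c • v ∈ Set.Icc (0 : Fin n → ℝ) 1 ∧ ∀ i, SIS h δ B H (c • v) i < c * v i := by
  have hev : ∀ᶠ c in 𝓝 (0 : ℝ), ∀ i, c * v i < 1 ∧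
      ((1 - h • Matrix.diagonal δ + h • B) *ᵥ v) i + h * c * tensorQuad H v i < v i :=
    eventually_all.2 fun i =>
      (ContinuousAt.eventually_lt (by fun_prop) (by fun_prop) (by simp)).and
        (ContinuousAt.eventually_lt (by fun_prop) (by fun_prop) (by simpa using hMv i))
  filter_upwards [nhdsWithin_le_nhds hev, self_mem_nhdsWithin] with c hc (hc0 : 0 < c)
  refine ⟨⟨fun i => (mul_pos hc0 (hv i)).le, fun i => (hc i).1.le⟩, fun i => ?_⟩
  calc SIS h δ B H (c • v) i
      ≤ c * ((1 - h • Matrix.diagonal δ + h • B) *ᵥ v) i + h * c ^ 2 * tensorQuad H v i :=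
        SIS_smul_le hh hB hH hc0.le (fun j => (hv j).le) i
    _ = c * (((1 - h • Matrix.diagonal δ + h • B) *ᵥ v) i + h * c * tensorQuad H v i) := by ring
    _ < c * v i := mul_lt_mul_of_pos_left (hc i).2 hc0

theorem SIS_locAsympStable_zero (hh : 0 ≤ h) (hδ : ∀ i, 0 ≤ δ i) (hB : ∀ i j, 0 ≤ B i j)
    (hH : ∀ i j k, 0 ≤ H i j k) (hA3b : ∀ i, h * (δ i + (∑ j, B i j) + ∑ j, ∑ k, H i j k) < 1)
    (hρ : specRad ((1 : Matrix (Fin n) (Fin n) ℝ) - h • Matrix.diagonal δ + h • B) < 1) :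
    LocAsympStable (SIS h δ B H) 0 := by
  have hδ1 : ∀ i, h * δ i ≤ 1 := fun i => by
    simpa [infectionRate, tensorQuad] using
      (add_infectionRate_lt hh hB hH hA3b (x := 0) (left_mem_Icc.2 zero_le_one) i).le
  obtain ⟨v, hv, hMv⟩ := Matrix.exists_pos_mulVec_lt_of_spectralRadius_lt_one
    (linearization_nonneg hh hδ1 hB) (spectralRadius_lt_one_of_specRad_lt_one hρ)
  exact locAsympStable_zero_of_eventually_map_smul_lt (mapsTo_SIS hh hδ hB hH hA3b)
    (monotoneOn_SIS hh hB hH hA3b) continuous_SIS SIS_zero hv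
    (eventually_SIS_smul_lt hh hB hH hv hMv)

theorem SIS_balance_of_isFixedPt (hh : h ≠ 0) {x : Fin n → ℝ} (hfix : IsFixedPt (SIS h δ B H) x)
    (i : Fin n) : δ i * x i = (1 - x i) * infectionRate B H x i := by
  have hi := congrFun hfix.eq i
  rw [SIS_apply] at hi
  have : h * (-(δ i * x i) + (1 - x i) * infectionRate B H x i) = 0 := by linarith
  linarith [(mul_eq_zero.1 this).resolve_left hh]

theorem SIS_smul_sub_of_isFixedPt (hh : h ≠ 0) {x : Fin n → ℝ}
    (hfix : IsFixedPt (SIS h δ B H) x) (l : ℝ) (i : Fin n) :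
    SIS h δ B H (l • x) i - l * x i =
      h * l * (1 - l) * ((B *ᵥ x) i * x i - tensorQuad H x i * (1 - (1 + l) * x i)) := by
  have hbal := SIS_balance_of_isFixedPt hh hfix i
  have hQ := congrFun (tensorQuad_smul (H := H) l x) i
  simp only [SIS_apply, infectionRate, Pi.add_apply, Pi.smul_apply, smul_eq_mul,
    Matrix.mulVec_smul] at hbal hQ ⊢
  rw [hQ]
  linear_combination (-(h * l)) * hbal

theorem half_smul_le_SIS (hh : 0 ≤ h) (hB : ∀ i j, 0 ≤ B i j) (hH : ∀ i j k, 0 ≤ H i j k)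
    (hA3b : ∀ i, h * (δ i + (∑ j, B i j) + ∑ j, ∑ k, H i j k) < 1) {z : Fin n → ℝ}
    (hz : ∀ i, z i = 0 ∨ z i = 1)
    (hθ : ∀ i, z i = 1 → 4 * δ i ≤ 2 * (B *ᵥ z) i + tensorQuad H z i) {x : Fin n → ℝ}
    (hx : x ∈ Set.Icc 0 1) (hzx : (1 / 2 : ℝ) • z ≤ x) : (1 / 2 : ℝ) • z ≤ SIS h δ B H x := by
  intro i
  rcases hz i with hzi | hzi
  · simpa [hzi] using (SIS_mem_Icc hh hB hH hA3b hx i).1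
  have hz0 : 0 ≤ z := fun j => by rcases hz j with e | e <;> simp [e]
  have hL := Matrix.mulVec_mono_of_nonneg hB hzx i
  have hQ := tensorQuad_mono hH (smul_nonneg (by norm_num) hz0) hzx i
  rw [Matrix.mulVec_smul] at hL
  rw [tensorQuad_smul] at hQ
  have hr : δ i ≤ infectionRate B H x i := by
    simp only [Pi.smul_apply, smul_eq_mul, infectionRate, Pi.add_apply] at hL hQ ⊢
    linarith [hθ i hzi]
  have hxi : 1 / 2 ≤ x i := by simpa [hzi] using hzx i
  have hlt := add_infectionRate_lt hh hB hH hA3b hx i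
  simp only [hzi, Pi.smul_apply, smul_eq_mul, mul_one, SIS_apply]
  nlinarith [mul_nonneg (sub_nonneg.2 hxi) (sub_nonneg.2 hlt.le), mul_le_mul_of_nonneg_left hr hh]

theorem exists_isFixedPt_SIS_half_smul_le (hh : 0 ≤ h) (hδ : ∀ i, 0 ≤ δ i)
    (hB : ∀ i j, 0 ≤ B i j) (hH : ∀ i j k, 0 ≤ H i j k)
    (hA3b : ∀ i, h * (δ i + (∑ j, B i j) + ∑ j, ∑ k, H i j k) < 1) {z : Fin n → ℝ}
    (hz : ∀ i, z i = 0 ∨ z i = 1)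
    (hθ : ∀ i, z i = 1 → 4 * δ i ≤ 2 * (B *ᵥ z) i + tensorQuad H z i) :
    ∃ xb ∈ Set.Icc 0 1, IsFixedPt (SIS h δ B H) xb ∧ (1 / 2 : ℝ) • z ≤ xb := by
  have hmaps := mapsTo_SIS hh hδ hB hH hA3b
  have hK : MapsTo (SIS h δ B H) {x | x ∈ Set.Icc 0 1 ∧ (1 / 2 : ℝ) • z ≤ x}
      {x | x ∈ Set.Icc 0 1 ∧ (1 / 2 : ℝ) • z ≤ x} := fun x hx =>
    ⟨hmaps hx.1, half_smul_le_SIS hh hB hH hA3b hz hθ hx.1 hx.2⟩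
  have h1 : (1 : Fin n → ℝ) ∈ {x | x ∈ Set.Icc 0 1 ∧ (1 / 2 : ℝ) • z ≤ x} :=
    ⟨right_mem_Icc.2 zero_le_one, fun i => by rcases hz i with e | e <;> norm_num [e]⟩
  obtain ⟨q, hq, h0q, hq1, htend⟩ := exists_isFixedPt_tendsto_iterate_of_map_le hmaps
    (monotoneOn_SIS hh hB hH hA3b) continuous_SIS h1.1 (left_mem_Icc.2 zero_le_one)
    (hmaps h1.1).2 SIS_zero zero_le_one
  exact ⟨q, ⟨h0q, hq1⟩, hq,
    isClosed_Ici.mem_of_tendsto htend (Eventually.of_forall fun t => (hK.iterate t h1).2)⟩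

theorem SIS_pos_of_isFixedPt (hh : h ≠ 0) (hB : ∀ i j, 0 ≤ B i j) (hH : ∀ i j k, 0 ≤ H i j k)
    (hirr : MatIrred B) {x : Fin n → ℝ} (hx : 0 ≤ x) (hfix : IsFixedPt (SIS h δ B H) x)
    (hne : ∃ i, x i ≠ 0) (i : Fin n) : 0 < x i := by
  refine hirr.pos_of_support_closed hx hne (fun i j hi hij => ?_) i
  have hbal := SIS_balance_of_isFixedPt hh hfix i
  rw [hi, mul_zero, sub_zero, one_mul, infectionRate, Pi.add_apply] at hbal
  have hL : (B *ᵥ x) i = 0 := le_antisymm (by linarith [tensorQuad_nonneg hH hx i])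
    (Matrix.mulVec_nonneg_of_nonneg hB hx i)
  have hL' : ∑ k, B i k * x k = 0 := hL
  have := (sum_eq_zero_iff_of_nonneg fun k _ => mul_nonneg (hB i k) (hx k)).1 hL' j (mem_univ j)
  exact (mul_eq_zero.1 this).resolve_left hij

theorem SIS_locAsympStable_of_isFixedPt (hh : 0 < h) (hδ : ∀ i, 0 < δ i)
    (hB : ∀ i j, 0 ≤ B i j) (hH : ∀ i j k, 0 ≤ H i j k)
    (hA3b : ∀ i, h * (δ i + (∑ j, B i j) + ∑ j, ∑ k, H i j k) < 1) {x : Fin n → ℝ}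
    (hxs : x ∈ Set.Icc 0 1) (hpos : ∀ i, 0 < x i) (hfix : IsFixedPt (SIS h δ B H) x)
    (hg : ∀ i, 0 < (B *ᵥ x) i * x i - tensorQuad H x i * (1 - 2 * x i)) :
    LocAsympStable (SIS h δ B H) x := by
  have hlt1 : ∀ i, x i < 1 := fun i => by
    have := (SIS_mem_Icc hh.le hB hH hA3b hxs i).2
    rw [hfix.eq] at this
    linarith [mul_pos hh (hδ i)]
  have hev : ∀ᶠ l in 𝓝 (1 : ℝ), l • x ∈ Set.Icc (0 : Fin n → ℝ) 1 ∧
      ∀ i, 0 < l * ((B *ᵥ x) i * x i - tensorQuad H x i * (1 - (1 + l) * x i)) := by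
    refine (Tendsto.eventually ?_ (pi_Icc_mem_nhds hpos hlt1)).and
      (eventually_all.2 fun i => ContinuousAt.eventually_lt continuousAt_const (by fun_prop)
        (by norm_num; linarith [hg i]))
    simpa using (tendsto_id (x := 𝓝 (1 : ℝ))).smul_const x
  refine locAsympStable_of_eventually_smul (mapsTo_SIS hh.le (fun i => (hδ i).le) hB hH hA3b)
    (monotoneOn_SIS hh.le hB hH hA3b) continuous_SIS hxs hpos hfix ?_ ?_
  · filter_upwards [nhdsWithin_le_nhds hev, self_mem_nhdsWithin] with l ⟨hl, hgl⟩ (hl1 : l < 1)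
    refine ⟨hl, fun i => ?_⟩
    have := SIS_smul_sub_of_isFixedPt hh.ne' hfix l i
    nlinarith [mul_pos (mul_pos hh (sub_pos.2 hl1)) (hgl i)]
  · filter_upwards [nhdsWithin_le_nhds hev, self_mem_nhdsWithin] with l ⟨hl, hgl⟩ (hl1 : 1 < l)
    refine ⟨hl, fun i => ?_⟩
    have := SIS_smul_sub_of_isFixedPt hh.ne' hfix l i
    nlinarith [mul_pos (mul_pos hh (sub_pos.2 hl1)) (hgl i)]

end SIS

/-- Bistability: if `ρ(I − hD + hB) < 1` and
`θ = min_{i : z_i = 1} (2Σ_j β_{ij} z_j + Σ_{j,k} β_{ijk} z_j z_k)/δ_i ≥ 4`, then the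
healthy state is locally asymptotically stable and there is a locally asymptotically
stable endemic equilibrium `x̄ ≫ 0` with `x̄_i ≥ 1/2` whenever `z_i = 1`. -/
theorem stmt2 {n : ℕ} (hn : 2 ≤ n) (h : ℝ) (hh : 0 < h)
    (δ : Fin n → ℝ) (B : Matrix (Fin n) (Fin n) ℝ) (H : Fin n → Fin n → Fin n → ℝ)
    (hδ : ∀ i, 0 < δ i) (hB : ∀ i j, 0 ≤ B i j) (hH : ∀ i j k, 0 ≤ H i j k)
    (hA2 : MatIrred B)
    (hA3b : ∀ i, h * (δ i + (∑ j, B i j) + ∑ j, ∑ k, H i j k) < 1)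
    (z : Fin n → ℝ)
    (hz : ∀ i, ((∃ j k, 0 < H i j k) → z i = 1) ∧ (¬ (∃ j k, 0 < H i j k) → z i = 0))
    (hzne : ∃ i, z i = 1)
    (hρ : specRad ((1 : Matrix (Fin n) (Fin n) ℝ) - h • Matrix.diagonal δ + h • B) < 1)
    (hθ : ∀ i, z i = 1 →
      (4 : ℝ) ≤ (2 * (∑ j, B i j * z j) + ∑ j, ∑ k, H i j k * z j * z k) / δ i) :
    LocAsympStable (SIS h δ B H) 0 ∧
    ∃ xb : Fin n → ℝ, InCube xb ∧ (∀ i, 0 < xb i) ∧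
      (∀ i, z i = 1 → (1 : ℝ) / 2 ≤ xb i) ∧
      SIS h δ B H xb = xb ∧ LocAsympStable (SIS h δ B H) xb := by
  have hz01 : ∀ i, z i = 0 ∨ z i = 1 := fun i =>
    (em (∃ j k, 0 < H i j k)).elim (fun hi => .inr ((hz i).1 hi)) fun hi => .inl ((hz i).2 hi)
  obtain ⟨xb, hxbs, hfix, hzxb⟩ := exists_isFixedPt_SIS_half_smul_le hh.le (fun i => (hδ i).le)
    hB hH hA3b hz01 fun i hi => (le_div_iff₀ (hδ i)).1 (hθ i hi)
  have hhalf : ∀ i, z i = 1 → (1 : ℝ) / 2 ≤ xb i := fun i hi => by simpa [hi] using hzxb i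
  have hpos := SIS_pos_of_isFixedPt hh.ne' hB hH hA2 hxbs.1 hfix
    (hzne.imp fun i hi => (one_half_pos.trans_le (hhalf i hi)).ne')
  refine ⟨SIS_locAsympStable_zero hh.le (fun i => (hδ i).le) hB hH hA3b hρ, xb,
    inCube_iff_mem_Icc.2 hxbs, hpos, hhalf, hfix,
    SIS_locAsympStable_of_isFixedPt hh hδ hB hH hA3b hxbs hpos hfix fun i => ?_⟩
  have hBx := mul_pos (hA2.mulVec_pos hn hB hpos i) (hpos i)
  rcases hz01 i with hzi | hzi
  · have hQ : tensorQuad H xb i = 0 := sum_eq_zero fun j _ => sum_eq_zero fun k _ => by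
      rw [le_antisymm (not_lt.1 fun hjk => by simp [(hz i).1 ⟨j, k, hjk⟩] at hzi) (hH i j k)]
      ring
    simpa [hQ] using hBx
  · nlinarith [tensorQuad_nonneg hH hxbs.1 i, hhalf i hzi]
end

section
/- Under Assumptions A2 and A3a, suppose in addition that the array H is irreducible. (a) If Σ_j β_{ij} < δ_i < Σ_j β_{ij} + Σ_{j,k} β_{ijk} for all i, then the healthy state 0 is locally asymptotically stable and every trajectory with x(0) ∈ [0,1]^n and max_i |x_i(0)| < α₁ converges to 0, where α₁ = min_i (δ_i − Σ_j β_{ij})/(Σ_{j,k} β_{ijk}). (b) If δ_i > Σ_j β_{ij} + Σ_{j,k} β_{ijk} for all i, then the healthy state is globally asymptotically stable on [0,1]^n: it is locally asymptotically stable and every trajectory with x(0) ∈ [0,1]^n converges to 0. -/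
open Finset Filter

/-! Writing `F(x)_i = (1 - hδ_i) x_i + h (1 - x_i) P_i(x)` with the infection pressure
`P_i(x) = Σ_j β_{ij} x_j + Σ_{j,k} β_{ijk} x_j x_k`, one gets from `hδ_i ≤ 1`, for
`x ∈ [0,1]^n` with `x ≤ m ≤ M` coordinatewise, the bound
`0 ≤ F(x)_i ≤ (1 - h (δ_i - Σ_j β_{ij} - M Σ_{j,k} β_{ijk})) m`.
Hence, as long as the margins `δ_i - Σ_j β_{ij} - ‖x(0)‖ Σ_{j,k} β_{ijk}` are positive,
the sup norm contracts by a fixed factor `c < 1`; it is then nonincreasing, so the margins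
stay positive along the trajectory. Both conditions (a) and (b) make these margins
positive, on `‖x(0)‖ < α₁` and on all of `[0,1]^n` respectively. -/

open Topology

lemma exists_mem_Ico_forall_le_of_lt_one {ι : Type*} [Finite ι] {f : ι → ℝ}
    (hf : ∀ i, f i < 1) : ∃ c ∈ Set.Ico (0 : ℝ) 1, ∀ i, f i ≤ c := by
  have hev : ∀ᶠ c in 𝓝[<] (1 : ℝ), 0 ≤ c ∧ ∀ i, f i ≤ c :=
    nhdsWithin_le_nhds ((eventually_ge_nhds zero_lt_one).and
      (eventually_all.2 fun i => eventually_ge_nhds (hf i)))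
  obtain ⟨c, ⟨hc0, hfc⟩, hc1⟩ := (hev.and self_mem_nhdsWithin).exists
  exact ⟨c, ⟨hc0, hc1⟩, hfc⟩

lemma InCube.norm_le_one {n : ℕ} {y : Fin n → ℝ} (hy : InCube y) : ‖y‖ ≤ 1 :=
  (pi_norm_le_iff_of_nonneg zero_le_one).2 fun i => by
    rw [Real.norm_eq_abs, abs_le]
    exact ⟨by linarith [(hy i).1], (hy i).2⟩

namespace SIS

variable {n : ℕ} {h : ℝ} {δ : Fin n → ℝ} {B : Matrix (Fin n) (Fin n) ℝ}
  {H : Fin n → Fin n → Fin n → ℝ} {x : Fin n → ℝ} {m M : ℝ}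

def pressure (B : Matrix (Fin n) (Fin n) ℝ) (H : Fin n → Fin n → Fin n → ℝ)
    (x : Fin n → ℝ) (i : Fin n) : ℝ :=
  (∑ j, B i j * x j) + ∑ j, ∑ k, H i j k * x j * x k

lemma apply_eq (i : Fin n) :
    SIS h δ B H x i = (1 - h * δ i) * x i + h * (1 - x i) * pressure B H x i := by
  simp only [SIS, pressure]
  ring

lemma pressure_nonneg (hB : ∀ i j, 0 ≤ B i j) (hH : ∀ i j k, 0 ≤ H i j k)
    (hx : ∀ j, 0 ≤ x j) (i : Fin n) : 0 ≤ pressure B H x i :=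
  add_nonneg (sum_nonneg fun j _ => mul_nonneg (hB i j) (hx j))
    (sum_nonneg fun j _ => sum_nonneg fun k _ => mul_nonneg (mul_nonneg (hH i j k) (hx j)) (hx k))

lemma pressure_le (hB : ∀ i j, 0 ≤ B i j) (hH : ∀ i j k, 0 ≤ H i j k)
    (hx : ∀ j, 0 ≤ x j) (hxm : ∀ j, x j ≤ m) (hmM : m ≤ M) (i : Fin n) :
    pressure B H x i ≤ ((∑ j, B i j) + M * ∑ j, ∑ k, H i j k) * m := by
  have hB' : ∑ j, B i j * x j ≤ ∑ j, B i j * m :=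
    sum_le_sum fun j _ => mul_le_mul_of_nonneg_left (hxm j) (hB i j)
  have hH' : ∑ j, ∑ k, H i j k * x j * x k ≤ ∑ j, ∑ k, H i j k * m * M :=
    sum_le_sum fun j _ => sum_le_sum fun k _ => by
      have hm : 0 ≤ m := (hx j).trans (hxm j)
      have := hH i j k
      gcongr
      · exact hx k
      · exact hxm j
      · exact (hxm k).trans hmM
  calc pressure B H x i ≤ ∑ j, B i j * m + ∑ j, ∑ k, H i j k * m * M := add_le_add hB' hH'
    _ = ((∑ j, B i j) + M * ∑ j, ∑ k, H i j k) * m := by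
      simp only [← sum_mul]
      ring

variable (hδh : ∀ i, h * δ i ≤ 1) (hB : ∀ i j, 0 ≤ B i j) (hH : ∀ i j k, 0 ≤ H i j k)
include hδh hB hH

lemma apply_nonneg (hh : 0 ≤ h) (hx : ∀ j, 0 ≤ x j) {i : Fin n} (hxi : x i ≤ 1) :
    0 ≤ SIS h δ B H x i := by
  rw [apply_eq]
  have := sub_nonneg.2 (hδh i)
  have := pressure_nonneg hB hH hx i
  have := hx i
  have := sub_nonneg.2 hxi
  positivity

lemma apply_le (hh : 0 ≤ h) (hx : ∀ j, 0 ≤ x j) (hxm : ∀ j, x j ≤ m) (hmM : m ≤ M)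
    (i : Fin n) :
    SIS h δ B H x i ≤ (1 - h * (δ i - (∑ j, B i j) - M * ∑ j, ∑ k, H i j k)) * m := by
  have hP := pressure_nonneg hB hH hx i
  calc SIS h δ B H x i
      = (1 - h * δ i) * x i + h * (1 - x i) * pressure B H x i := apply_eq i
    _ ≤ (1 - h * δ i) * m + h * pressure B H x i := by
      gcongr
      · linarith [hδh i]
      · exact hxm i
      · exact mul_le_of_le_one_right hh (by linarith [hx i])
    _ ≤ (1 - h * δ i) * m + h * (((∑ j, B i j) + M * ∑ j, ∑ k, H i j k) * m) := by
      gcongr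
      exact pressure_le hB hH hx hxm hmM i
    _ = (1 - h * (δ i - (∑ j, B i j) - M * ∑ j, ∑ k, H i j k)) * m := by ring

lemma norm_le_geometric (hh : 0 < h) {x : ℕ → Fin n → ℝ} (hx : IsTraj (SIS h δ B H) x)
    (h0 : InCube (x 0)) (hmargin : ∀ i, ‖x 0‖ * ∑ j, ∑ k, H i j k < δ i - ∑ j, B i j) :
    ∃ c ∈ Set.Ico (0 : ℝ) 1, ∀ t, ‖x t‖ ≤ c ^ t * ‖x 0‖ := by
  obtain ⟨c, ⟨hc0, hc1⟩, hfc⟩ := exists_mem_Ico_forall_le_of_lt_one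
    (f := fun i => 1 - h * (δ i - (∑ j, B i j) - ‖x 0‖ * ∑ j, ∑ k, H i j k))
    fun i => by linarith [mul_pos hh (sub_pos.2 (hmargin i))]
  have hbound : ∀ t i, 0 ≤ x t i ∧ x t i ≤ c ^ t * ‖x 0‖ := by
    intro t
    induction t with
    | zero =>
      intro i
      simpa using ⟨(h0 i).1, (le_abs_self _).trans (norm_le_pi_norm (x 0) i)⟩
    | succ t ih =>
      have hm : c ^ t * ‖x 0‖ ≤ ‖x 0‖ :=
        mul_le_of_le_one_left (norm_nonneg _) (pow_le_one₀ hc0 hc1.le)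
      intro i
      rw [hx t]
      refine ⟨apply_nonneg hδh hB hH hh.le (fun j => (ih j).1)
        ((ih i).2.trans (hm.trans h0.norm_le_one)), ?_⟩
      calc SIS h δ B H (x t) i
          ≤ (1 - h * (δ i - (∑ j, B i j) - ‖x 0‖ * ∑ j, ∑ k, H i j k)) * (c ^ t * ‖x 0‖) :=
            apply_le hδh hB hH hh.le (fun j => (ih j).1) (fun j => (ih j).2) hm i
        _ ≤ c * (c ^ t * ‖x 0‖) := by gcongr; exact hfc i
        _ = c ^ (t + 1) * ‖x 0‖ := by ring
  refine ⟨c, ⟨hc0, hc1⟩, fun t => (pi_norm_le_iff_of_nonneg (by positivity)).2 fun i => ?_⟩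
  rw [Real.norm_of_nonneg (hbound t i).1]
  exact (hbound t i).2

lemma norm_le_and_tendsto_zero (hh : 0 < h) {x : ℕ → Fin n → ℝ}
    (hx : IsTraj (SIS h δ B H) x) (h0 : InCube (x 0))
    (hmargin : ∀ i, ‖x 0‖ * ∑ j, ∑ k, H i j k < δ i - ∑ j, B i j) :
    (∀ t, ‖x t‖ ≤ ‖x 0‖) ∧ Tendsto x atTop (𝓝 0) := by
  obtain ⟨c, ⟨hc0, hc1⟩, hdec⟩ := norm_le_geometric hδh hB hH hh hx h0 hmargin
  refine ⟨fun t => (hdec t).trans (mul_le_of_le_one_left (norm_nonneg _)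
    (pow_le_one₀ hc0 hc1.le)), squeeze_zero_norm hdec ?_⟩
  simpa using (tendsto_pow_atTop_nhds_zero_of_lt_one hc0 hc1).mul_const ‖x 0‖

lemma locAsympStable_zero (hh : 0 < h) (hlt : ∀ i, ∑ j, B i j < δ i) :
    LocAsympStable (SIS h δ B H) 0 := by
  have hev : ∀ᶠ r in 𝓝 (0 : ℝ), ∀ i, r * ∑ j, ∑ k, H i j k < δ i - ∑ j, B i j :=
    eventually_all.2 fun i => ((continuous_mul_const _).tendsto' 0 0 (zero_mul _)).eventually
      (eventually_lt_nhds (sub_pos.2 (hlt i)))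
  obtain ⟨r, hr, hr0⟩ :=
    ((hev.filter_mono (nhdsWithin_le_nhds (s := Set.Ioi 0))).and self_mem_nhdsWithin).exists
  intro ε hε
  refine ⟨min ε r, lt_min hε hr0, fun x hx h0 hxd => ?_⟩
  simp only [sub_zero] at hxd ⊢
  have hmargin : ∀ i, ‖x 0‖ * ∑ j, ∑ k, H i j k < δ i - ∑ j, B i j := fun i =>
    (mul_le_mul_of_nonneg_right (hxd.trans_le (min_le_right _ _)).le
      (sum_nonneg fun j _ => sum_nonneg fun k _ => hH i j k)).trans_lt (hr i)
  obtain ⟨hle, hlim⟩ := norm_le_and_tendsto_zero hδh hB hH hh hx h0 hmargin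
  exact ⟨fun t => (hle t).trans_lt (hxd.trans_le (min_le_left _ _)), hlim⟩

end SIS

theorem stmt4_general {n : ℕ} (h : ℝ) (hh : 0 < h)
    (δ : Fin n → ℝ) (B : Matrix (Fin n) (Fin n) ℝ) (H : Fin n → Fin n → Fin n → ℝ)
    (hB : ∀ i j, 0 ≤ B i j) (hH : ∀ i j k, 0 ≤ H i j k)
    (hA3a : ∀ i, h * δ i ≤ 1 ∧ h * ((∑ j, B i j) + ∑ j, ∑ k, H i j k) ≤ 1) :
    ((∀ i, (∑ j, B i j) < δ i ∧ δ i < (∑ j, B i j) + ∑ j, ∑ k, H i j k) →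
      LocAsympStable (SIS h δ B H) 0 ∧
      ∀ x : ℕ → Fin n → ℝ, IsTraj (SIS h δ B H) x → InCube (x 0) →
        ‖x 0‖ < (⨅ i, (δ i - ∑ j, B i j) / (∑ j, ∑ k, H i j k)) →
        Tendsto x atTop (nhds 0)) ∧
    ((∀ i, (∑ j, B i j) + (∑ j, ∑ k, H i j k) < δ i) →
      LocAsympStable (SIS h δ B H) 0 ∧
      ∀ x : ℕ → Fin n → ℝ, IsTraj (SIS h δ B H) x → InCube (x 0) →
        Tendsto x atTop (nhds 0)) := by
  have hδh : ∀ i, h * δ i ≤ 1 := fun i => (hA3a i).1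
  have hH_sum : ∀ i, 0 ≤ ∑ j, ∑ k, H i j k := fun i =>
    sum_nonneg fun j _ => sum_nonneg fun k _ => hH i j k
  refine ⟨fun ha => ⟨SIS.locAsympStable_zero hδh hB hH hh fun i => (ha i).1,
      fun x hx h0 hα => (SIS.norm_le_and_tendsto_zero hδh hB hH hh hx h0 fun i => ?_).2⟩,
    fun hb => ⟨SIS.locAsympStable_zero hδh hB hH hh fun i => by linarith [hb i, hH_sum i],
      fun x hx h0 => (SIS.norm_le_and_tendsto_zero hδh hB hH hh hx h0 fun i => ?_).2⟩⟩
  · have hH_pos : 0 < ∑ j, ∑ k, H i j k := by linarith [ha i]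
    exact (lt_div_iff₀ hH_pos).1 (hα.trans_le (ciInf_le (Finite.bddBelow_range _) i))
  · calc ‖x 0‖ * ∑ j, ∑ k, H i j k ≤ 1 * ∑ j, ∑ k, H i j k :=
          mul_le_mul_of_nonneg_right h0.norm_le_one (hH_sum i)
      _ < δ i - ∑ j, B i j := by linarith [hb i]

/-- with `H` irreducible, (a) if `Σ_j β_{ij} < δ_i < Σ_j β_{ij} + Σ_{j,k} β_{ijk}`
for all `i`, the healthy state is locally asymptotically stable with domain of attraction
`max_i |x_i(0)| < α₁ = min_i (δ_i − Σ_j β_{ij})/(Σ_{j,k} β_{ijk})`; (b) if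
`δ_i > Σ_j β_{ij} + Σ_{j,k} β_{ijk}` for all `i`, the healthy state is globally
asymptotically stable on `[0,1]^n`. -/
theorem stmt4 {n : ℕ} (hn : 2 ≤ n) (h : ℝ) (hh : 0 < h)
    (δ : Fin n → ℝ) (B : Matrix (Fin n) (Fin n) ℝ) (H : Fin n → Fin n → Fin n → ℝ)
    (hδ : ∀ i, 0 < δ i) (hB : ∀ i j, 0 ≤ B i j) (hH : ∀ i j k, 0 ≤ H i j k)
    (hA2 : MatIrred B)
    (hA3a : ∀ i, h * δ i ≤ 1 ∧ h * ((∑ j, B i j) + ∑ j, ∑ k, H i j k) ≤ 1)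
    (hHirr : TensIrred H) :
    ((∀ i, (∑ j, B i j) < δ i ∧ δ i < (∑ j, B i j) + ∑ j, ∑ k, H i j k) →
      LocAsympStable (SIS h δ B H) 0 ∧
      ∀ x : ℕ → Fin n → ℝ, IsTraj (SIS h δ B H) x → InCube (x 0) →
        ‖x 0‖ < (⨅ i, (δ i - ∑ j, B i j) / (∑ j, ∑ k, H i j k)) →
        Tendsto x atTop (nhds 0)) ∧
    ((∀ i, (∑ j, B i j) + (∑ j, ∑ k, H i j k) < δ i) →
      LocAsympStable (SIS h δ B H) 0 ∧
      ∀ x : ℕ → Fin n → ℝ, IsTraj (SIS h δ B H) x → InCube (x 0) →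
        Tendsto x atTop (nhds 0)) :=
  stmt4_general h hh δ B H hB hH hA3a
end

section
/- Under Assumptions A5 and A6a, every trajectory of the bi-virus SIS map G starting in S satisfies (x₁(t), x₂(t)) ∈ S for all t ≥ 0; that is, x_{ℓi}(t) ∈ [0,1] and 1 − x_{1i}(t) − x_{2i}(t) ∈ [0,1] for all i ∈ {1,…,n}, ℓ ∈ {1,2} and all t ≥ 0, so that S is positively invariant under G. -/
open Finset Filter

/-- The bi-virus discrete-time higher-order SIS map `G`: virus `ℓ ∈ {0,1}` evolves by
`y_{ℓi} = x_{ℓi} + h(−δ_{ℓi} x_{ℓi} + (1 − x_{0i} − x_{1i})(Σ_j β_{ℓ,ij} x_{ℓj}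
+ Σ_{j,k} β_{ℓ,ijk} x_{ℓj} x_{ℓk}))`. -/
noncomputable def biSIS {n : ℕ} (h : ℝ) (δ : Fin 2 → Fin n → ℝ)
    (B : Fin 2 → Matrix (Fin n) (Fin n) ℝ) (H : Fin 2 → Fin n → Fin n → Fin n → ℝ)
    (x : Fin 2 → Fin n → ℝ) : Fin 2 → Fin n → ℝ := fun ℓ i =>
  x ℓ i + h * (-(δ ℓ i * x ℓ i) + (1 - x 0 i - x 1 i) *
    ((∑ j, B ℓ i j * x ℓ j) + ∑ j, ∑ k, H ℓ i j k * x ℓ j * x ℓ k))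

/-- `x` is a trajectory of the discrete-time system `x(t+1) = G(x(t))`. -/
def IsTraj2 {n : ℕ} (G : (Fin 2 → Fin n → ℝ) → Fin 2 → Fin n → ℝ)
    (x : ℕ → Fin 2 → Fin n → ℝ) : Prop := ∀ t, x (t + 1) = G (x t)

/-- The simplex-like invariant set
`S = {(x₁,x₂) : x_{ℓi} ≥ 0, x_{1i} + x_{2i} ≤ 1}`. -/
def InS {n : ℕ} (x : Fin 2 → Fin n → ℝ) : Prop :=
  (∀ ℓ i, 0 ≤ x ℓ i) ∧ ∀ i, x 0 i + x 1 i ≤ 1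

/-- Local asymptotic stability (max-norm) of an equilibrium `p` of the bi-virus map,
for trajectories starting in `S`. -/
def LocAsympStable2 {n : ℕ} (G : (Fin 2 → Fin n → ℝ) → Fin 2 → Fin n → ℝ)
    (p : Fin 2 → Fin n → ℝ) : Prop :=
  ∀ ε > 0, ∃ d > 0, ∀ x : ℕ → Fin 2 → Fin n → ℝ, IsTraj2 G x → InS (x 0) →
    ‖x 0 - p‖ < d → (∀ t, ‖x t - p‖ < ε) ∧ Tendsto x atTop (nhds p)

/-- Instability (max-norm) of an equilibrium `p` of the bi-virus map, for trajectories
starting in `S`. -/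
def Unstable2 {n : ℕ} (G : (Fin 2 → Fin n → ℝ) → Fin 2 → Fin n → ℝ)
    (p : Fin 2 → Fin n → ℝ) : Prop :=
  ∃ ε > 0, ∀ d > 0, ∃ x : ℕ → Fin 2 → Fin n → ℝ, IsTraj2 G x ∧ InS (x 0) ∧
    ‖x 0 - p‖ < d ∧ ∃ t, ε ≤ ‖x t - p‖

/-
Writing `s = 1 - x₀ - x₁` and `F_ℓ` for the force of infection of virus `ℓ`, one has
`y_ℓ = (1 - hδ_ℓ) x_ℓ + h s F_ℓ` and `1 - y₀ - y₁ = s (1 - h (F₀ + F₁)) + hδ₀ x₀ + hδ₁ x₁`.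
On `S` every `x_ℓ j` lies in `[0, 1]`, so `0 ≤ F_ℓ ≤` (row sum of `β_ℓ`), and Assumption A6a
makes every coefficient nonnegative; positive invariance then follows by induction on `t`.
-/

section ForceOfInfection

variable {ι : Type*} [Fintype ι]

def forceOfInfection (B : Matrix ι ι ℝ) (H : ι → ι → ι → ℝ) (v : ι → ℝ) (i : ι) : ℝ :=
  (∑ j, B i j * v j) + ∑ j, ∑ k, H i j k * v j * v k

def rowSum (B : Matrix ι ι ℝ) (H : ι → ι → ι → ℝ) (i : ι) : ℝ :=
  (∑ j, B i j) + ∑ j, ∑ k, H i j k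

variable {B : Matrix ι ι ℝ} {H : ι → ι → ι → ℝ} {v : ι → ℝ}

theorem forceOfInfection_nonneg (hB : ∀ i j, 0 ≤ B i j) (hH : ∀ i j k, 0 ≤ H i j k)
    (hv : ∀ j, 0 ≤ v j) (i : ι) : 0 ≤ forceOfInfection B H v i :=
  add_nonneg (sum_nonneg fun j _ => mul_nonneg (hB i j) (hv j))
    (sum_nonneg fun j _ => sum_nonneg fun k _ => mul_nonneg (mul_nonneg (hH i j k) (hv j)) (hv k))

theorem forceOfInfection_le_rowSum (hB : ∀ i j, 0 ≤ B i j) (hH : ∀ i j k, 0 ≤ H i j k)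
    (hv : ∀ j, 0 ≤ v j) (hv₁ : ∀ j, v j ≤ 1) (i : ι) :
    forceOfInfection B H v i ≤ rowSum B H i := by
  refine add_le_add (sum_le_sum fun j _ => ?_) (sum_le_sum fun j _ => sum_le_sum fun k _ => ?_)
  · exact mul_le_of_le_one_right (hB i j) (hv₁ j)
  · rw [mul_assoc]
    exact mul_le_of_le_one_right (hH i j k) (mul_le_one₀ (hv₁ j) (hv k) (hv₁ k))

end ForceOfInfection

section Invariance

variable {n : ℕ} {x : Fin 2 → Fin n → ℝ}

theorem InS.le_one (hx : InS x) (ℓ : Fin 2) (i : Fin n) : x ℓ i ≤ 1 := by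
  obtain ⟨hpos, hsum⟩ := hx
  match ℓ with
  | 0 => linarith [hpos 1 i, hsum i]
  | 1 => linarith [hpos 0 i, hsum i]

theorem InS.mem_Icc (hx : InS x) (ℓ : Fin 2) (i : Fin n) : x ℓ i ∈ Set.Icc (0 : ℝ) 1 :=
  ⟨hx.1 ℓ i, hx.le_one ℓ i⟩

theorem InS.one_sub_mem_Icc (hx : InS x) (i : Fin n) :
    1 - x 0 i - x 1 i ∈ Set.Icc (0 : ℝ) 1 :=
  ⟨by linarith [hx.2 i], by linarith [hx.1 0 i, hx.1 1 i]⟩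

theorem biSIS_apply (h : ℝ) (δ : Fin 2 → Fin n → ℝ) (B : Fin 2 → Matrix (Fin n) (Fin n) ℝ)
    (H : Fin 2 → Fin n → Fin n → Fin n → ℝ) (ℓ : Fin 2) (i : Fin n) :
    biSIS h δ B H x ℓ i = (1 - h * δ ℓ i) * x ℓ i +
      h * (1 - x 0 i - x 1 i) * forceOfInfection (B ℓ) (H ℓ) (x ℓ) i := by
  unfold biSIS forceOfInfection
  ring

theorem one_sub_biSIS_sub_biSIS (h : ℝ) (δ : Fin 2 → Fin n → ℝ)
    (B : Fin 2 → Matrix (Fin n) (Fin n) ℝ) (H : Fin 2 → Fin n → Fin n → Fin n → ℝ) (i : Fin n) :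
    1 - biSIS h δ B H x 0 i - biSIS h δ B H x 1 i =
      (1 - x 0 i - x 1 i) * (1 - h * (forceOfInfection (B 0) (H 0) (x 0) i +
        forceOfInfection (B 1) (H 1) (x 1) i)) + h * δ 0 i * x 0 i + h * δ 1 i * x 1 i := by
  rw [biSIS_apply, biSIS_apply]
  ring

theorem inS_biSIS {h : ℝ} {δ : Fin 2 → Fin n → ℝ} {B : Fin 2 → Matrix (Fin n) (Fin n) ℝ}
    {H : Fin 2 → Fin n → Fin n → Fin n → ℝ} (hx : InS x) (hh : 0 ≤ h) (hδ : ∀ ℓ i, 0 ≤ δ ℓ i)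
    (hB : ∀ ℓ i j, 0 ≤ B ℓ i j) (hH : ∀ ℓ i j k, 0 ≤ H ℓ i j k)
    (hhδ : ∀ ℓ i, h * δ ℓ i ≤ 1) (hrow : ∀ i, h * ∑ ℓ, rowSum (B ℓ) (H ℓ) i ≤ 1) :
    InS (biSIS h δ B H x) := by
  have hs : ∀ i, 0 ≤ 1 - x 0 i - x 1 i := fun i => (hx.one_sub_mem_Icc i).1
  have hF : ∀ ℓ i, 0 ≤ forceOfInfection (B ℓ) (H ℓ) (x ℓ) i := fun ℓ =>
    forceOfInfection_nonneg (hB ℓ) (hH ℓ) (hx.1 ℓ)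
  have hFle : ∀ ℓ i, forceOfInfection (B ℓ) (H ℓ) (x ℓ) i ≤ rowSum (B ℓ) (H ℓ) i := fun ℓ =>
    forceOfInfection_le_rowSum (hB ℓ) (hH ℓ) (hx.1 ℓ) (hx.le_one ℓ)
  refine ⟨fun ℓ i => ?_, fun i => ?_⟩
  · rw [biSIS_apply]
    exact add_nonneg (mul_nonneg (sub_nonneg.2 (hhδ ℓ i)) (hx.1 ℓ i))
      (mul_nonneg (mul_nonneg hh (hs i)) (hF ℓ i))
  · have hhF : h * (forceOfInfection (B 0) (H 0) (x 0) i +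
        forceOfInfection (B 1) (H 1) (x 1) i) ≤ 1 := by
      refine (mul_le_mul_of_nonneg_left (add_le_add (hFle 0 i) (hFle 1 i)) hh).trans ?_
      simpa only [Fin.sum_univ_two] using hrow i
    have hnonneg : 0 ≤ 1 - biSIS h δ B H x 0 i - biSIS h δ B H x 1 i := by
      rw [one_sub_biSIS_sub_biSIS]
      have := mul_nonneg (hs i) (sub_nonneg.2 hhF)
      have := mul_nonneg (mul_nonneg hh (hδ 0 i)) (hx.1 0 i)
      have := mul_nonneg (mul_nonneg hh (hδ 1 i)) (hx.1 1 i)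
      linarith
    linarith

end Invariance

theorem IsTraj2.forall_of_invariant {n : ℕ} {G : (Fin 2 → Fin n → ℝ) → Fin 2 → Fin n → ℝ}
    {x : ℕ → Fin 2 → Fin n → ℝ} {p : (Fin 2 → Fin n → ℝ) → Prop} (hx : IsTraj2 G x)
    (hG : ∀ y, p y → p (G y)) (h0 : p (x 0)) : ∀ t, p (x t)
  | 0 => h0
  | t + 1 => hx t ▸ hG _ (hx.forall_of_invariant hG h0 t)

theorem stmt8_general {n : ℕ} (h : ℝ) (hh : 0 < h)
    (δ : Fin 2 → Fin n → ℝ) (B : Fin 2 → Matrix (Fin n) (Fin n) ℝ)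
    (H : Fin 2 → Fin n → Fin n → Fin n → ℝ)
    (hδ : ∀ ℓ i, 0 < δ ℓ i) (hB : ∀ ℓ i j, 0 ≤ B ℓ i j) (hH : ∀ ℓ i j k, 0 ≤ H ℓ i j k)
    (hA6a : ∀ ℓ i, h * δ ℓ i ≤ 1 ∧
      h * (∑ l, ((∑ j, B l i j) + ∑ j, ∑ k, H l i j k)) ≤ 1)
    (x : ℕ → Fin 2 → Fin n → ℝ) (hx : IsTraj2 (biSIS h δ B H) x) (h0 : InS (x 0)) :
    ∀ t, InS (x t) ∧ (∀ ℓ i, x t ℓ i ∈ Set.Icc (0 : ℝ) 1) ∧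
      ∀ i, 1 - x t 0 i - x t 1 i ∈ Set.Icc (0 : ℝ) 1 := by
  have hS : ∀ t, InS (x t) := hx.forall_of_invariant (fun y hy =>
    inS_biSIS hy hh.le (fun ℓ i => (hδ ℓ i).le) hB hH (fun ℓ i => (hA6a ℓ i).1)
      (fun i => (hA6a 0 i).2)) h0
  exact fun t => ⟨hS t, (hS t).mem_Icc, (hS t).one_sub_mem_Icc⟩

/-- under Assumptions A5 and A6a, the set `S` is positively invariant
under the bi-virus SIS map `G`: along any trajectory starting in `S`, `x_{ℓi}(t) ∈ [0,1]`
and `1 − x_{1i}(t) − x_{2i}(t) ∈ [0,1]` for all `ℓ, i, t`. -/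
theorem stmt8 {n : ℕ} (hn : 2 ≤ n) (h : ℝ) (hh : 0 < h)
    (δ : Fin 2 → Fin n → ℝ) (B : Fin 2 → Matrix (Fin n) (Fin n) ℝ)
    (H : Fin 2 → Fin n → Fin n → Fin n → ℝ)
    (hδ : ∀ ℓ i, 0 < δ ℓ i) (hB : ∀ ℓ i j, 0 ≤ B ℓ i j) (hH : ∀ ℓ i j k, 0 ≤ H ℓ i j k)
    (hA5 : ∀ ℓ, MatIrred (B ℓ))
    (hA6a : ∀ ℓ i, h * δ ℓ i ≤ 1 ∧
      h * (∑ l, ((∑ j, B l i j) + ∑ j, ∑ k, H l i j k)) ≤ 1)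
    (x : ℕ → Fin 2 → Fin n → ℝ) (hx : IsTraj2 (biSIS h δ B H) x) (h0 : InS (x 0)) :
    ∀ t, InS (x t) ∧ (∀ ℓ i, x t ℓ i ∈ Set.Icc (0 : ℝ) 1) ∧
      ∀ i, 1 - x t 0 i - x t 1 i ∈ Set.Icc (0 : ℝ) 1 :=
  stmt8_general h hh δ B H hδ hB hH hA6a x hx h0
end
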